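/- arXiv:2501.11729 — 3 statements merged into one kernel-verified Lean document; each statement's English description precedes it below -/
import Mathlib

section
/- Let h_L be the final state of the scalar recurrence h_l = exp(α Δ_l) h_{l-1} + (exp(α Δ_l) - 1) x_l / α run over indices l = m, m+1, ..., L starting from h_{m-1}, and let h_L^m be the final state of the same recurrence run over indices l = m+1, ..., L starting from the same h_{m-1} (i.e., skipping step m). Then h_L - h_L^m = exp(α Σ_{i=1}^{L-m} Δ_{m+i}) · (exp(α Δ_m) - 1) · (h_{m-1} + x_m / α). -/
open Finset

/-- closed form of the difference between the final state of the
    scalar recurrence run over `l = m, ..., L` and the final state of the same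
    recurrence skipping step `m`. -/
theorem skipped_step_difference
    (α : ℝ) (hα : α ≠ 0) (Δ x : ℕ → ℝ) (m L : ℕ) (hm : 1 ≤ m) (hmL : m ≤ L)
    (h0 : ℝ) (s s' : ℕ → ℝ)
    (hinit : s (m - 1) = h0)
    (hrec : ∀ l, m ≤ l → l ≤ L →
      s l = Real.exp (α * Δ l) * s (l - 1) + (Real.exp (α * Δ l) - 1) * x l / α)
    (hinit' : s' m = h0)
    (hrec' : ∀ l, m + 1 ≤ l → l ≤ L →
      s' l = Real.exp (α * Δ l) * s' (l - 1) + (Real.exp (α * Δ l) - 1) * x l / α) :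
    s L - s' L =
      Real.exp (α * ∑ i ∈ Finset.Icc 1 (L - m), Δ (m + i)) *
        (Real.exp (α * Δ m) - 1) * (h0 + x m / α) := by
  have key : ∀ l, m ≤ l → l ≤ L →
      s l - s' l = Real.exp (α * ∑ i ∈ Finset.Icc 1 (l - m), Δ (m + i)) *
        (Real.exp (α * Δ m) - 1) * (h0 + x m / α) := by
    intro l hl
    induction l, hl using Nat.le_induction with
    | base =>
      intro hL
      rw [hrec m le_rfl hL, hinit, hinit']
      simp only [Nat.sub_self]
      norm_num
      field_simp
      ring
    | succ l hml ih =>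
      intro hL
      have hlL : l ≤ L := le_trans (Nat.le_succ l) hL
      have ihl := ih hlL
      rw [hrec (l+1) (by omega) hL, hrec' (l+1) (by omega) hL]
      simp only [Nat.add_sub_cancel]
      rw [show (l+1) - m = (l - m) + 1 by omega,
        Finset.sum_Icc_succ_top (by omega : 1 ≤ l - m + 1),
        show m + (l - m + 1) = l + 1 by omega]
      simp only [mul_add, Real.exp_add]
      linear_combination Real.exp (α * Δ (l+1)) * ihl
  exact key L hmL le_rfl
end

section
/- Consider the diagonal discrete SSM over ℝ^N with recurrence h_l = exp(Δ_l A) h_{l-1} + (Δ_l A)^{-1}(exp(Δ_l A) - I) Δ_l x_l where A is a diagonal matrix with nonzero diagonal entries A_jj = α_j. Let h_L be the final state using all inputs x_m,...,x_L and h_L^m the final state obtained by removing the m-th step. Then for each component j, (h_L - h_L^m)_j = exp(α_j Σ_{i=1}^{L-m} Δ_{m+i}) (exp(α_j Δ_m) - 1) ((h_{m-1})_j + (x_m)_j / α_j); in particular, if the vector with components c_j = α_j exp(α_j Σ_{i=1}^{L-m} Δ_{m+i}) ((h_{m-1})_j + (x_m)_j / α_j) is nonzero, then ‖h_L - h_L^m‖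 ~ ‖c‖ · Δ_m as Δ_m → 0⁺. -/
open Finset Filter Topology

/-!
After step `m` both runs obey the same affine recurrence, so their difference obeys the
homogeneous one and is multiplied by `exp (α j * Δ l)` at every later step; at step `m` it is
`(exp (α j * d) - 1) * (h0 j + x m j / α j)`. Hence `v` is differentiable, vanishes at `d = 0`
and has derivative `c 0` there, which gives `‖v d‖ ~ ‖c 0‖ * d`.
-/

theorem sub_eq_prod_mul_sub_of_affine_rec {R : Type*} [CommRing R] {a b u w : ℕ → R} {m L : ℕ}
    (hu : ∀ l, m + 1 ≤ l → l ≤ L → u l = a l * u (l - 1) + b l)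
    (hw : ∀ l, m + 1 ≤ l → l ≤ L → w l = a l * w (l - 1) + b l) :
    ∀ k, m + k ≤ L → u (m + k) - w (m + k) = (∏ i ∈ Icc 1 k, a (m + i)) * (u m - w m) := by
  intro k
  induction k with
  | zero => simp
  | succ k ih =>
    intro hk
    rw [prod_Icc_succ_top (Nat.le_add_left 1 k), ← add_assoc,
      hu (m + k + 1) (by omega) hk, hw (m + k + 1) (by omega) hk, Nat.add_sub_cancel]
    linear_combination a (m + k + 1) * ih (by omega)

theorem sub_eq_exp_sum_mul_sub_of_exp_rec {α : ℝ} {Δ b u w : ℕ → ℝ} {m L : ℕ}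
    (hu : ∀ l, m + 1 ≤ l → l ≤ L → u l = Real.exp (α * Δ l) * u (l - 1) + b l)
    (hw : ∀ l, m + 1 ≤ l → l ≤ L → w l = Real.exp (α * Δ l) * w (l - 1) + b l) (hmL : m ≤ L) :
    u L - w L = Real.exp (α * ∑ i ∈ Icc 1 (L - m), Δ (m + i)) * (u m - w m) := by
  obtain ⟨k, rfl⟩ := Nat.exists_eq_add_of_le hmL
  rw [Nat.add_sub_cancel_left, mul_sum, Real.exp_sum]
  exact sub_eq_prod_mul_sub_of_affine_rec hu hw k le_rfl

theorem EuclideanSpace.hasDerivAt_of_forall {ι : Type*} [Fintype ι] {v : ℝ → EuclideanSpace ℝ ι}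
    {c : EuclideanSpace ℝ ι} {t : ℝ} (h : ∀ i, HasDerivAt (fun s => v s i) (c i) t) :
    HasDerivAt v c t := by
  exact (PiLp.continuousLinearEquiv 2 ℝ _).symm.hasFDerivAt.comp_hasDerivAt t (hasDerivAt_pi.2 h)

theorem tendsto_norm_div_norm_mul_nhdsGT_of_hasDerivAt {E : Type*} [NormedAddCommGroup E]
    [NormedSpace ℝ E] {v : ℝ → E} {c : E} (hv : HasDerivAt v c 0) (hv0 : v 0 = 0) (hc : c ≠ 0) :
    Tendsto (fun d => ‖v d‖ / (‖c‖ * d)) (𝓝[>] 0) (𝓝 1) := by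
  have hslope := hv.tendsto_slope_zero_right.norm.div_const ‖c‖
  rw [div_self (norm_ne_zero_iff.mpr hc)] at hslope
  refine hslope.congr' ?_
  filter_upwards [self_mem_nhdsWithin] with d (hd : 0 < d)
  rw [zero_add, hv0, sub_zero, norm_smul, norm_inv, Real.norm_of_nonneg hd.le]
  field_simp

theorem diagonal_ssm_removed_step_general
    (N : ℕ) (α : Fin N → ℝ)
    (Δ : ℕ → ℝ) (x : ℕ → Fin N → ℝ)
    (m L : ℕ) (hmL : m ≤ L)
    (h0 : Fin N → ℝ)
    (s : ℝ → ℕ → Fin N → ℝ) (s' : ℕ → Fin N → ℝ)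
    (hstepm : ∀ d j, s d m j =
      Real.exp (α j * d) * h0 j + (Real.exp (α j * d) - 1) / α j * x m j)
    (hrec : ∀ d l, m + 1 ≤ l → l ≤ L → ∀ j,
      s d l j = Real.exp (α j * Δ l) * s d (l - 1) j +
        (Real.exp (α j * Δ l) - 1) / α j * x l j)
    (hinit' : s' m = h0)
    (hrec' : ∀ l, m + 1 ≤ l → l ≤ L → ∀ j,
      s' l j = Real.exp (α j * Δ l) * s' (l - 1) j +
        (Real.exp (α j * Δ l) - 1) / α j * x l j) :
    (∀ d j, s d L j - s' L j =
        Real.exp (α j * ∑ i ∈ Finset.Icc 1 (L - m), Δ (m + i)) *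
          (Real.exp (α j * d) - 1) * (h0 j + x m j / α j)) ∧
    (∀ (c v : ℝ → EuclideanSpace ℝ (Fin N)),
      (∀ d j, c d j =
        α j * Real.exp (α j * ∑ i ∈ Finset.Icc 1 (L - m), Δ (m + i)) *
          (h0 j + x m j / α j)) →
      (∀ d j, v d j = s d L j - s' L j) →
      c 0 ≠ 0 →
      Tendsto (fun d : ℝ => ‖v d‖ / (‖c 0‖ * d)) (𝓝[>] (0 : ℝ)) (𝓝 1)) := by
  have hdiff : ∀ d j, s d L j - s' L j =
      Real.exp (α j * ∑ i ∈ Finset.Icc 1 (L - m), Δ (m + i)) *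
        (Real.exp (α j * d) - 1) * (h0 j + x m j / α j) := fun d j => by
    rw [sub_eq_exp_sum_mul_sub_of_exp_rec (fun l h₁ h₂ => hrec d l h₁ h₂ j)
      (fun l h₁ h₂ => hrec' l h₁ h₂ j) hmL, hstepm, hinit']
    ring
  refine ⟨hdiff, fun c v hc hv hc0 => ?_⟩
  refine tendsto_norm_div_norm_mul_nhdsGT_of_hasDerivAt ?_ ?_ hc0
  · refine EuclideanSpace.hasDerivAt_of_forall fun j => ?_
    simp only [hv, hdiff, hc]
    have hexp : HasDerivAt (fun d => Real.exp (α j * d) - 1) (α j) 0 := by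
      simpa using ((hasDerivAt_id (0 : ℝ)).const_mul (α j)).exp.sub_const 1
    exact ((hexp.const_mul _).mul_const _).congr_deriv (by ring)
  · ext j
    simp [hv, hdiff]

/-- diagonal discrete SSM over ℝ^N. Componentwise closed form of
    the difference `h_L - h_L^m`, and the asymptotic `‖h_L - h_L^m‖ ~ ‖c‖ Δ_m`
    as `Δ_m → 0⁺` when `c ≠ 0`. The state `s d l` is parameterized by
    `d = Δ_m`, the time interval used at step `m`. -/
theorem diagonal_ssm_removed_step
    (N : ℕ) (α : Fin N → ℝ) (hα : ∀ j, α j ≠ 0)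
    (Δ : ℕ → ℝ) (hΔ : ∀ l, 0 < Δ l) (x : ℕ → Fin N → ℝ)
    (m L : ℕ) (hm : 1 ≤ m) (hmL : m ≤ L)
    (h0 : Fin N → ℝ)
    (s : ℝ → ℕ → Fin N → ℝ) (s' : ℕ → Fin N → ℝ)
    (hinit : ∀ d, s d (m - 1) = h0)
    (hstepm : ∀ d j, s d m j =
      Real.exp (α j * d) * h0 j + (Real.exp (α j * d) - 1) / α j * x m j)
    (hrec : ∀ d l, m + 1 ≤ l → l ≤ L → ∀ j,
      s d l j = Real.exp (α j * Δ l) * s d (l - 1) j +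
        (Real.exp (α j * Δ l) - 1) / α j * x l j)
    (hinit' : s' m = h0)
    (hrec' : ∀ l, m + 1 ≤ l → l ≤ L → ∀ j,
      s' l j = Real.exp (α j * Δ l) * s' (l - 1) j +
        (Real.exp (α j * Δ l) - 1) / α j * x l j) :
    (∀ d j, s d L j - s' L j =
        Real.exp (α j * ∑ i ∈ Finset.Icc 1 (L - m), Δ (m + i)) *
          (Real.exp (α j * d) - 1) * (h0 j + x m j / α j)) ∧
    (∀ (c v : ℝ → EuclideanSpace ℝ (Fin N)),
      (∀ d j, c d j =
        α j * Real.exp (α j * ∑ i ∈ Finset.Icc 1 (L - m), Δ (m + i)) *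
          (h0 j + x m j / α j)) →
      (∀ d j, v d j = s d L j - s' L j) →
      c 0 ≠ 0 →
      Tendsto (fun d : ℝ => ‖v d‖ / (‖c 0‖ * d)) (𝓝[>] (0 : ℝ)) (𝓝 1)) :=
  diagonal_ssm_removed_step_general N α Δ x m L hmL h0 s s' hstepm hrec hinit' hrec'
end

section
/- For the scalar recurrence h_l = exp(αΔ_l) h_{l-1} + (exp(αΔ_l) − 1) x_l / α with α < 0, if all inputs satisfy |x_l| ≤ M and h_0 = 0, then |h_l| ≤ M/|α| · (1 − exp(α Σ_{i=1}^{l} Δ_i)) ≤ M/|α| for all l; i.e., the state is uniformly bounded. -/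
open Finset

/-- with `α < 0`, positive intervals, `|x_l| ≤ M` and `h_0 = 0`,
    the state of the scalar recurrence is uniformly bounded:
    `|h_l| ≤ M/|α| (1 − exp(α Σ_{i=1}^l Δ_i)) ≤ M/|α|`. -/
theorem bounded_state
    (α M : ℝ) (hα : α < 0) (hM : 0 ≤ M)
    (Δ x : ℕ → ℝ) (hΔ : ∀ l, 0 < Δ l) (hx : ∀ l, |x l| ≤ M)
    (h : ℕ → ℝ) (hinit : h 0 = 0)
    (hrec : ∀ l : ℕ, h (l + 1) =
      Real.exp (α * Δ (l + 1)) * h l + (Real.exp (α * Δ (l + 1)) - 1) * x (l + 1) / α) :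
    ∀ l, |h l| ≤ M / |α| * (1 - Real.exp (α * ∑ i ∈ Finset.Icc 1 l, Δ i)) ∧
      M / |α| * (1 - Real.exp (α * ∑ i ∈ Finset.Icc 1 l, Δ i)) ≤ M / |α| := by
  have hMα : 0 ≤ M / |α| := div_nonneg hM (abs_nonneg α)
  have second : ∀ l, M / |α| * (1 - Real.exp (α * ∑ i ∈ Finset.Icc 1 l, Δ i)) ≤ M / |α| := by
    intro l
    nlinarith [Real.exp_pos (α * ∑ i ∈ Finset.Icc 1 l, Δ i)]
  intro l
  refine ⟨?_, second l⟩
  induction l with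
  | zero => simp [hinit]
  | succ n ih =>
    have hsum : ∑ i ∈ Finset.Icc 1 (n + 1), Δ i
        = (∑ i ∈ Finset.Icc 1 n, Δ i) + Δ (n + 1) := by
      rw [Finset.sum_Icc_succ_top (by omega)]
    have hE : Real.exp (α * Δ (n + 1)) < 1 := by
      apply Real.exp_lt_one_iff.mpr
      exact mul_neg_of_neg_of_pos hα (hΔ (n + 1))
    have hEpos := Real.exp_pos (α * Δ (n + 1))
    have hEfull : Real.exp (α * ∑ i ∈ Finset.Icc 1 (n + 1), Δ i)
        = Real.exp (α * Δ (n + 1)) * Real.exp (α * ∑ i ∈ Finset.Icc 1 n, Δ i) := by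
      rw [hsum, ← Real.exp_add]; ring_nf
    have hterm : |(Real.exp (α * Δ (n + 1)) - 1) * x (n + 1) / α|
        ≤ (1 - Real.exp (α * Δ (n + 1))) * (M / |α|) := by
      rw [abs_div, abs_mul, abs_of_neg (by linarith : Real.exp (α * Δ (n + 1)) - 1 < 0)]
      rw [neg_sub]
      have hαpos : 0 < |α| := abs_pos.mpr (ne_of_lt hα)
      rw [div_eq_mul_one_div M]
      have h1 : (0:ℝ) ≤ 1 / |α| := by positivity
      have h2 : (0:ℝ) ≤ 1 - Real.exp (α * Δ (n + 1)) := by linarith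
      have h3 := mul_le_mul_of_nonneg_right (hx (n + 1)) h1
      have := mul_le_mul_of_nonneg_left h3 h2
      rw [div_eq_mul_one_div, mul_assoc]
      exact this
    calc |h (n + 1)| ≤ Real.exp (α * Δ (n + 1)) * |h n|
          + |(Real.exp (α * Δ (n + 1)) - 1) * x (n + 1) / α| := by
          rw [hrec n]
          refine (abs_add_le _ _).trans ?_
          rw [abs_mul, abs_of_pos hEpos]
      _ ≤ Real.exp (α * Δ (n + 1)) * (M / |α| * (1 - Real.exp (α * ∑ i ∈ Finset.Icc 1 n, Δ i)))
          + (1 - Real.exp (α * Δ (n + 1))) * (M / |α|) := by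
          gcongr
      _ = M / |α| * (1 - Real.exp (α * ∑ i ∈ Finset.Icc 1 (n + 1), Δ i)) := by
          rw [hEfull]; ring
end
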